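/- arXiv:2303.05773 — 3 statements merged into one kernel-verified Lean document; each statement's English description precedes it below -/
import Mathlib

section
/- Let a be an algebraic integer in the complex numbers. Then a is a root of unity if and only if for every field automorphism σ of ℂ, the complex absolute value of σ(a) equals 1. -/
/-!
A root of unity has all its conjugates of absolute value `1`. Conversely, `ℚ(a)` is a number
field, and every embedding of it into `ℂ` is the restriction of an automorphism of `ℂ`, because
`ℂ` is algebraically closed of uncountable transcendence degree over the countable field `ℚ(a)`.
So every conjugate of `a` under an embedding `ℚ(a) → ℂ` has absolute value `1`, and Kronecker's
theorem (`NumberField.Embeddings.pow_eq_one_of_norm_eq_one`) makes `a` a root of unity.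
-/

universe u

open Cardinal IntermediateField

theorem IsAlgClosed.equivOfTranscendenceBasis_algebraMap {R K L ι κ : Type*} [CommRing R]
    [Field K] [Field L] [Algebra R K] [Algebra R L] [IsAlgClosed K] [IsAlgClosed L]
    {v : ι → K} {w : κ → L} (e : ι ≃ κ) (hv : IsTranscendenceBasis R v)
    (hw : IsTranscendenceBasis R w) (r : R) :
    equivOfTranscendenceBasis v w e hv hw (algebraMap R K r) = algebraMap R L r := by
  let := isAlgClosure_of_transcendence_basis v hv
  let := isAlgClosure_of_transcendence_basis w hw
  rw [IsScalarTower.algebraMap_apply R (Algebra.adjoin R (Set.range v)) K,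
    IsScalarTower.algebraMap_apply R (Algebra.adjoin R (Set.range w)) L]
  unfold equivOfTranscendenceBasis
  rw [IsAlgClosure.equivOfEquiv_algebraMap]
  congr 1
  simp only [RingEquiv.coe_trans, Function.comp_apply, AlgEquiv.coe_ringEquiv, AlgEquiv.commutes]

/-- Over a countable field, a transcendence basis of an uncountable algebraically closed field
has the cardinality of the field itself, so transcendence bases of `K` and `L` over `F` are
equipotent. -/
theorem IsAlgClosed.exists_ringEquiv_apply_eq {F K L : Type u} [Field F] [Field K] [Field L]
    [IsAlgClosed K] [IsAlgClosed L] (hF : #F ≤ ℵ₀) (hK : ℵ₀ < #K) (hKL : #K = #L)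
    (φ : F →+* K) (ψ : F →+* L) : ∃ σ : K ≃+* L, ∀ x, σ (φ x) = ψ x := by
  let := φ.toAlgebra
  let := ψ.toAlgebra
  obtain ⟨s, hs⟩ := exists_isTranscendenceBasis F K
  obtain ⟨t, ht⟩ := exists_isTranscendenceBasis F L
  have hs_card := cardinal_eq_cardinal_transcendence_basis_of_aleph0_lt' _ hs hF hK
  have ht_card := cardinal_eq_cardinal_transcendence_basis_of_aleph0_lt' _ ht hF (hKL ▸ hK)
  obtain ⟨e⟩ := Cardinal.eq.1 (hs_card.symm.trans (hKL.trans ht_card))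
  exact ⟨_, equivOfTranscendenceBasis_algebraMap e hs ht⟩

theorem Complex.exists_ringEquiv_apply_eq {F : Type} [Field F] (hF : #F ≤ ℵ₀)
    (φ ψ : F →+* ℂ) : ∃ σ : ℂ ≃+* ℂ, ∀ x, σ (φ x) = ψ x :=
  IsAlgClosed.exists_ringEquiv_apply_eq hF (by rw [mk_complex]; exact aleph0_lt_continuum) rfl φ ψ

theorem NumberField.cardinalMk_le_aleph0 (K : Type*) [Field K] [NumberField K] : #K ≤ ℵ₀ := by
  simpa using Algebra.IsAlgebraic.lift_cardinalMk_le_max ℚ K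

theorem NumberField.pow_eq_one_of_norm_ringEquiv_eq_one {K : Type} [Field K] [NumberField K]
    (φ : K →+* ℂ) {x : K} (hx : IsIntegral ℤ x) (h : ∀ σ : ℂ ≃+* ℂ, ‖σ (φ x)‖ = 1) :
    ∃ n : ℕ, 0 < n ∧ x ^ n = 1 := by
  have hconj (ψ : K →+* ℂ) : ‖ψ x‖ = 1 := by
    obtain ⟨σ, hσ⟩ := Complex.exists_ringEquiv_apply_eq (cardinalMk_le_aleph0 K) φ ψ
    rw [← hσ, h]
  obtain ⟨n, hn, hxn⟩ := Embeddings.pow_eq_one_of_norm_eq_one K ℂ hx hconj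
  exact ⟨n, hn, hxn⟩

/-- Kronecker's analytic criterion: an algebraic integer `a ∈ ℂ` is a root of unity
if and only if all its conjugates under field automorphisms of `ℂ` have absolute value `1`. -/
theorem stmt_0 (a : ℂ) (ha : IsIntegral ℤ a) :
    (∃ n : ℕ, 0 < n ∧ a ^ n = 1) ↔ ∀ σ : ℂ ≃+* ℂ, ‖σ a‖ = 1 := by
  refine ⟨fun ⟨n, hn, han⟩ σ ↦ Complex.norm_eq_one_of_pow_eq_one
    (by rw [← map_pow, han, map_one]) hn.ne', fun h ↦ ?_⟩
  have : FiniteDimensional ℚ ℚ⟮a⟯ := adjoin.finiteDimensional ha.tower_top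
  have : NumberField ℚ⟮a⟯ := ⟨⟩
  have hgen : IsIntegral ℤ (AdjoinSimple.gen ℚ a) := by
    rwa [← isIntegral_algebraMap_iff (algebraMap ℚ⟮a⟯ ℂ).injective, AdjoinSimple.algebraMap_gen]
  obtain ⟨n, hn, hgen_pow⟩ := NumberField.pow_eq_one_of_norm_ringEquiv_eq_one
    (algebraMap ℚ⟮a⟯ ℂ) hgen (by simpa using h)
  exact ⟨n, hn, by simpa using congrArg (algebraMap ℚ⟮a⟯ ℂ) hgen_pow⟩
end

section
/- Let a be an algebraic integer with minimal polynomial f of degree d over ℚ, with conjugates α_1,...,α_d. If all conjugates α_i of a have complex absolute value at most 1, then the set {a^n : n ≥ 1} is finite, hence a is zero or a root of unity. -/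
open IntermediateField NumberField Polynomial

/-!
Realise `a` as the generator `x` of the number field `ℚ⟮a⟯`. The complex embeddings of `ℚ⟮a⟯`
send `x` to the conjugates of `a`, so every power `x ^ n` is an algebraic integer all of whose
conjugates lie in the closed unit disk. The coefficients of the minimal polynomials of such
numbers are bounded, hence only finitely many of them occur, and a nonzero `a` with finitely
many powers must satisfy `a ^ m = a ^ k` for some `k < m`, i.e. it is a root of unity
(Kronecker's theorem).
-/

theorem apply_mem_aroots_minpoly {K A : Type*} [Field K] [CharZero K] [Field A] [CharZero A]
    {x : K} (hx : IsIntegral ℚ x) (φ : K →+* A) : φ x ∈ (minpoly ℚ x).aroots A := by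
  rw [mem_aroots]
  refine ⟨minpoly.ne_zero hx, ?_⟩
  rw [show φ x = φ.toRatAlgHom x from rfl, aeval_algHom_apply, minpoly.aeval, map_zero]

theorem NumberField.finite_range_pow_of_norm_le_one {K A : Type*} [Field K] [NumberField K]
    [NormedField A] [IsAlgClosed A] [NormedAlgebra ℚ A] {x : K} (hxi : IsIntegral ℤ x)
    (hx : ∀ φ : K →+* A, ‖φ x‖ ≤ 1) : (Set.range (x ^ · : ℕ → K)).Finite := by
  refine (Embeddings.finite_of_norm_le K A 1).subset ?_
  rintro _ ⟨n, rfl⟩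
  refine ⟨hxi.pow n, fun φ => ?_⟩
  rw [map_pow, norm_pow]
  exact pow_le_one₀ (norm_nonneg _) (hx φ)

/-- If all complex roots (conjugates) of the minimal polynomial of an algebraic integer `a`
have absolute value at most `1`, then the set of positive powers of `a` is finite, and
hence `a` is zero or a root of unity. -/
theorem stmt_1 (a : ℂ) (ha : IsIntegral ℤ a)
    (hconj : ∀ α ∈ (minpoly ℚ a).aroots ℂ, ‖α‖ ≤ 1) :
    {x : ℂ | ∃ n : ℕ, 1 ≤ n ∧ x = a ^ n}.Finite ∧
      (a = 0 ∨ ∃ n : ℕ, 0 < n ∧ a ^ n = 1) := by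
  have haQ : IsIntegral ℚ a := ha.tower_top
  have : FiniteDimensional ℚ ℚ⟮a⟯ := adjoin.finiteDimensional haQ
  have : NumberField ℚ⟮a⟯ := ⟨⟩
  set x := AdjoinSimple.gen ℚ a
  have hxa : algebraMap ℚ⟮a⟯ ℂ x = a := AdjoinSimple.algebraMap_gen ℚ a
  have hxi : IsIntegral ℤ x := by
    rwa [← isIntegral_algebraMap_iff (algebraMap ℚ⟮a⟯ ℂ).injective, hxa]
  have hx : ∀ φ : ℚ⟮a⟯ →+* ℂ, ‖φ x‖ ≤ 1 := fun φ =>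
    hconj _ (minpoly_gen ℚ a ▸ apply_mem_aroots_minpoly ((AdjoinSimple.isIntegral_gen ℚ a).2 haQ) φ)
  refine ⟨?_, or_iff_not_imp_left.2 fun ha0 => ?_⟩
  · refine ((finite_range_pow_of_norm_le_one hxi hx).image (algebraMap ℚ⟮a⟯ ℂ)).subset ?_
    rintro _ ⟨n, -, rfl⟩
    exact ⟨x ^ n, ⟨n, rfl⟩, by rw [map_pow, hxa]⟩
  · have hx0 : x ≠ 0 := fun h => ha0 (by rw [← hxa, h, map_zero])
    obtain ⟨n, hn, hxn⟩ := Embeddings.pow_eq_one_of_norm_le_one ℚ⟮a⟯ ℂ hx0 hxi hx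
    exact ⟨n, hn, by rw [← hxa, ← map_pow, hxn, map_one]⟩
end

section
/- Let Γ be a finitely generated group whose profinite completion is trivial. Then every group homomorphism ρ : Γ → GL_r(ℂ) is trivial (its image is the identity matrix). -/
open Matrix

theorem intJacobson : IsJacobsonRing ℤ := by
  rw [isJacobsonRing_iff_prime_eq]
  intro P hP
  refine le_antisymm ?_ Ideal.le_jacobson
  rcases eq_or_ne P ⊥ with rfl | hbot
  · intro x hx
    rw [Ideal.mem_jacobson_bot] at hx
    have h1 := hx 1; have h2 := hx (-1)
    rw [Int.isUnit_iff] at h1 h2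
    rw [Ideal.mem_bot]; omega
  · haveI := IsPrime.to_maximal_ideal hbot (hpi := hP)
    exact sInf_le ⟨le_rfl, this⟩

theorem finite_units' (M : Type*) [Monoid M] [Finite M] : Finite Mˣ :=
  Finite.of_injective (fun u => ((u : M), ((u⁻¹ : Mˣ) : M)))
    (fun _ _ h => Units.ext (congrArg Prod.fst h))

theorem finite_of_fieldZ (k : Type*) [Field k] [Algebra ℤ k] [Algebra.FiniteType ℤ k] :
    Finite k := by
  haveI := intJacobson
  haveI h1 : @Module.Finite ℤ k _ _ Algebra.toModule :=
    finite_of_finite_type_of_isJacobsonRing ℤ k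
  haveI : Algebra.IsIntegral ℤ k := Algebra.IsIntegral.of_finite ℤ k
  obtain ⟨p, hp⟩ := CharP.exists k
  have hp0 : p ≠ 0 := by
    rintro rfl
    haveI : CharZero k := CharP.charP_to_charZero k
    exact Int.not_isField
      ((Algebra.IsIntegral.isField_iff_isField (algebraMap ℤ k).injective_int).mpr
        (Field.toIsField k))
  haveI : Subsingleton (Module ℤ k) := (AddCommGroup.uniqueIntModule (M := k)).instSubsingleton
  haveI h2 : Module.Finite ℤ k := by
    rwa [Subsingleton.elim (AddCommGroup.toIntModule k) (Algebra.toModule (R := ℤ) (A := k))]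
  refine Module.finite_of_fg_torsion k ?_
  intro x
  refine ⟨⟨(p : ℤ), mem_nonZeroDivisors_of_ne_zero (by exact_mod_cast hp0)⟩, ?_⟩
  have h0 : ((p : ℤ) : k) = 0 := by exact_mod_cast (CharP.cast_eq_zero k p)
  show (p : ℤ) • x = 0
  rw [zsmul_eq_mul, h0, zero_mul]


theorem malcev_aux {Γ : Type*} [Group Γ]
    (htriv : ∀ (Q : Type) [Group Q] [Finite Q] (f : Γ →* Q),
      Function.Surjective f → ∀ q : Q, q = 1)
    (r : ℕ) (A : Type) [CommRing A] [IsDomain A] [Algebra ℤ A] [Algebra.FiniteType ℤ A]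
    (matA : Γ → Matrix (Fin r) (Fin r) A)
    (hone : matA 1 = 1) (hmul : ∀ γ δ, matA (γ * δ) = matA γ * matA δ) :
    ∀ γ : Γ, matA γ = 1 := by
  intro γ0
  by_contra hne
  have hij : ∃ i j, matA γ0 i j ≠ (1 : Matrix (Fin r) (Fin r) A) i j := by
    by_contra h
    push_neg at h
    exact hne (by ext i j; exact h i j)
  obtain ⟨i, j, hij⟩ := hij
  set a : A := matA γ0 i j - (1 : Matrix (Fin r) (Fin r) A) i j with ha'
  have ha : a ≠ 0 := sub_ne_zero.mpr hij
  haveI := intJacobson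
  haveI : IsJacobsonRing A := isJacobsonRing_of_finiteType (A := ℤ) (B := A)
  have hjac : ((⊥ : Ideal A)).jacobson = ⊥ :=
    ‹IsJacobsonRing A›.out (Ideal.bot_prime.isRadical)
  obtain ⟨m, hm, ham⟩ : ∃ m : Ideal A, ((⊥ : Ideal A) ≤ m ∧ m.IsMaximal) ∧ a ∉ m := by
    by_contra h
    push_neg at h
    apply ha
    rw [← Ideal.mem_bot, ← hjac, Ideal.jacobson]
    exact Ideal.mem_sInf.mpr fun {J} hJ => h J hJ
  haveI hmax : m.IsMaximal := hm.2
  letI : Field (A ⧸ m) := Ideal.Quotient.field m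
  haveI : Algebra.FiniteType ℤ (A ⧸ m) :=
    Algebra.FiniteType.of_surjective
      (Ideal.Quotient.mkₐ ℤ m) (Ideal.Quotient.mkₐ_surjective ℤ m)
  haveI : Finite (A ⧸ m) := finite_of_fieldZ (A ⧸ m)
  set φ := Ideal.Quotient.mk m with hφ
  set N : Γ → Matrix (Fin r) (Fin r) (A ⧸ m) := fun γ => (matA γ).map φ with hN
  have hNmul : ∀ γ δ, N (γ * δ) = N γ * N δ := by
    intro γ δ
    show (matA (γ * δ)).map φ = (matA γ).map φ * (matA δ).map φ
    rw [hmul, Matrix.map_mul]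
  have hNone : N 1 = 1 := by
    show (matA 1).map φ = 1
    rw [hone, Matrix.map_one φ (map_zero φ) (map_one φ)]
  set f : Γ →* (Matrix (Fin r) (Fin r) (A ⧸ m))ˣ :=
    { toFun := fun γ => ⟨N γ, N (γ⁻¹),
        by rw [← hNmul, mul_inv_cancel, hNone],
        by rw [← hNmul, inv_mul_cancel, hNone]⟩,
      map_one' := Units.ext hNone,
      map_mul' := fun γ δ => Units.ext (hNmul γ δ) } with hf
  haveI : Finite (Matrix (Fin r) (Fin r) (A ⧸ m))ˣ := finite_units' _
  have h1 := htriv f.range f.rangeRestrict f.rangeRestrict_surjective (f.rangeRestrict γ0)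
  have h2 : N γ0 = 1 := by
    have h3 : f γ0 = 1 := by
      have h4 := congrArg (Subtype.val) h1
      rwa [MonoidHom.coe_rangeRestrict] at h4
    exact congrArg Units.val h3
  apply ham
  rw [← Ideal.Quotient.eq_zero_iff_mem]
  show φ a = 0
  rw [ha', map_sub]
  have e1 : φ (matA γ0 i j) = (1 : Matrix (Fin r) (Fin r) (A ⧸ m)) i j :=
    congrFun (congrFun h2 i) j
  have e2 : φ ((1 : Matrix (Fin r) (Fin r) A) i j)
      = (1 : Matrix (Fin r) (Fin r) (A ⧸ m)) i j := by
    simp [Matrix.one_apply, apply_ite]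
  rw [e1, e2, sub_self]

set_option maxHeartbeats 1000000 in
/-- Mal'cev's theorem: a finitely generated group with trivial profinite completion
(i.e. all of whose finite quotients are trivial) has no nontrivial complex linear
representations. -/
theorem stmt_5 (Γ : Type*) [Group Γ] (hfg : Group.FG Γ)
    (htriv : ∀ (Q : Type) [Group Q] [Finite Q] (f : Γ →* Q),
      Function.Surjective f → ∀ q : Q, q = 1)
    (r : ℕ) (ρ : Γ →* GL (Fin r) ℂ) :
    ∀ g : Γ, ρ g = 1 := by
  classical
  obtain ⟨S, hS⟩ := hfg.out
  set E : Set ℂ :=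
    (⋃ g ∈ (S : Set Γ), (Set.range fun p : Fin r × Fin r =>
        ((ρ g : Matrix (Fin r) (Fin r) ℂ) p.1 p.2)) ∪
      (Set.range fun p : Fin r × Fin r =>
        (((ρ g)⁻¹ : GL (Fin r) ℂ) : Matrix (Fin r) (Fin r) ℂ) p.1 p.2)) with hE
  have hEfin : E.Finite :=
    Set.Finite.biUnion S.finite_toSet
      (fun g _ => (Set.finite_range _).union (Set.finite_range _))
  set A : Subalgebra ℤ ℂ := Algebra.adjoin ℤ E with hA
  haveI : Algebra.FiniteType ℤ A :=
    (Subalgebra.fg_iff_finiteType A).mp (Subalgebra.fg_def.mpr ⟨E, hEfin, rfl⟩)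
  have hprod : ∀ P Q : Matrix (Fin r) (Fin r) ℂ, (∀ i j, P i j ∈ A) →
      (∀ i j, Q i j ∈ A) → ∀ i j, (P * Q) i j ∈ A := by
    intro P Q hP hQ i j
    rw [Matrix.mul_apply]
    exact Subalgebra.sum_mem A fun k _ => mul_mem (hP i k) (hQ k j)
  set H : Subgroup (GL (Fin r) ℂ) :=
    { carrier := {M | (∀ i j, (M : Matrix (Fin r) (Fin r) ℂ) i j ∈ A) ∧
        (∀ i j, ((M⁻¹ : GL (Fin r) ℂ) : Matrix (Fin r) (Fin r) ℂ) i j ∈ A)},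
      one_mem' := by
        constructor <;> intro i j <;>
          · show (1 : Matrix (Fin r) (Fin r) ℂ) i j ∈ A
            rw [Matrix.one_apply]
            split
            · exact one_mem A
            · exact zero_mem A
      mul_mem' := by
        rintro M N ⟨hM, hM'⟩ ⟨hN, hN'⟩
        refine ⟨fun i j => ?_, fun i j => ?_⟩
        · exact hprod _ _ hM hN i j
        · rw [_root_.mul_inv_rev, Units.val_mul]
          exact hprod _ _ hN' hM' i j
      inv_mem' := by
        rintro M ⟨hM, hM'⟩
        refine ⟨hM', fun i j => ?_⟩
        rw [inv_inv]
        exact hM i j } with hH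
  have hmem : ∀ γ : Γ, ρ γ ∈ H := by
    intro γ
    have : (⊤ : Subgroup Γ) ≤ H.comap ρ := by
      rw [← hS, Subgroup.closure_le]
      intro g hg
      refine ⟨fun i j => ?_, fun i j => ?_⟩ <;>
        refine Algebra.subset_adjoin (Set.mem_biUnion hg ?_)
      · exact Or.inl ⟨(i, j), rfl⟩
      · exact Or.inr ⟨(i, j), rfl⟩
    exact this (Subgroup.mem_top γ)
  -- matrices over A realizing ρ
  set matA : Γ → Matrix (Fin r) (Fin r) A := fun γ => Matrix.of fun i j =>
    (⟨(ρ γ : Matrix (Fin r) (Fin r) ℂ) i j, (hmem γ).1 i j⟩ : A) with hmatA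
  have hval : ∀ γ (i j : Fin r), ((matA γ i j : A) : ℂ)
      = (ρ γ : Matrix (Fin r) (Fin r) ℂ) i j := fun γ i j => rfl
  have hone : matA 1 = 1 := by
    ext i j
    rw [hval, _root_.map_one ρ]
    show (1 : Matrix (Fin r) (Fin r) ℂ) i j = _
    simp [Matrix.one_apply, apply_ite]
  have hmul : ∀ γ δ, matA (γ * δ) = matA γ * matA δ := by
    intro γ δ
    ext i j
    rw [hval, _root_.map_mul ρ, Units.val_mul, Matrix.mul_apply, Matrix.mul_apply]
    push_cast
    exact Finset.sum_congr rfl fun k _ => rfl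
  intro g
  have hg : matA g = 1 := malcev_aux htriv r A matA hone hmul g
  apply Units.ext
  show (ρ g : Matrix (Fin r) (Fin r) ℂ) = 1
  ext i j
  rw [← hval g i j, hg]
  simp [Matrix.one_apply, apply_ite]
end
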